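/- (Generated substructure lemma) Let Y_f ∈ Adm_M be a grounded truth set, g ∈ Y_f, and Y_f^{g≤} := {h ∈ Y_f | g ≤ h}. If Φ(g) ∩ Y_f ≠ ∅, then θ_M^Φ(Y_f, g) = θ_M^Φ(Y_f^{g≤}, g); indeed, for every L_T-sentence φ and every J ∈ X: (D, X×Y_f, H_Φ), J_g ⊩ φ iff (D, X×Y_f^{g≤}, H_Φ), J_g ⊩ φ. -/
import Mathlib


set_option autoImplicit false

/-! ### First-order syntax -/

structure Signature : Type 1 where
  Func : Type
  farity : Func → ℕ
  Pred : Type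
  parity : Pred → ℕ

inductive Term (σ : Signature) : Type where
  | var : ℕ → Term σ
  | func : (f : σ.Func) → (Fin (σ.farity f) → Term σ) → Term σ

namespace Term
variable {σ : Signature}

def vars : Term σ → Set ℕ
  | .var n => {n}
  | .func _ ts => ⋃ i, (ts i).vars

def subst (x : ℕ) (u : Term σ) : Term σ → Term σ
  | .var n => if n = x then u else .var n
  | .func f ts => .func f (fun i => Term.subst x u (ts i))

end Term

inductive Formula (σ : Signature) : Type where
  | eq : Term σ → Term σ → Formula σ
  | pred : (P : σ.Pred) → (Fin (σ.parity P) → Term σ) → Formula σ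
  | neg : Formula σ → Formula σ
  | and : Formula σ → Formula σ → Formula σ
  | imp : Formula σ → Formula σ → Formula σ
  | all : ℕ → Formula σ → Formula σ

namespace Formula
variable {σ : Signature}

def free : Formula σ → Set ℕ
  | .eq s t => s.vars ∪ t.vars
  | .pred _ ts => ⋃ i, (ts i).vars
  | .neg φ => φ.free
  | .and φ ψ => φ.free ∪ ψ.free
  | .imp φ ψ => φ.free ∪ ψ.free
  | .all x φ => φ.free \ {x}

/-- A sentence is a closed formula. -/
def IsSentence (φ : Formula σ) : Prop := φ.free = ∅

def subst (x : ℕ) (u : Term σ) : Formula σ → Formula σ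
  | .eq s t => .eq (Term.subst x u s) (Term.subst x u t)
  | .pred P ts => .pred P (fun i => Term.subst x u (ts i))
  | .neg φ => .neg (φ.subst x u)
  | .and φ ψ => .and (φ.subst x u) (ψ.subst x u)
  | .imp φ ψ => .imp (φ.subst x u) (ψ.subst x u)
  | .all y φ => if y = x then .all y φ else .all y (φ.subst x u)

def IsLiteral : Formula σ → Prop
  | .eq _ _ => True
  | .pred _ _ => True
  | .neg (.eq _ _) => True
  | .neg (.pred _ _) => True
  | _ => False

/-- `u` is substitutable ("free for") `x` in the given formula. -/
def FreeFor (u : Term σ) (x : ℕ) : Formula σ → Prop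
  | .eq _ _ => True
  | .pred _ _ => True
  | .neg φ => φ.FreeFor u x
  | .and φ ψ => φ.FreeFor u x ∧ ψ.FreeFor u x
  | .imp φ ψ => φ.FreeFor u x ∧ ψ.FreeFor u x
  | .all y φ => x = y ∨ x ∉ (Formula.all y φ).free ∨ (y ∉ u.vars ∧ φ.FreeFor u x)

/-- Conditional-free formulas (the fragment `L⁻`). -/
def ImpFree : Formula σ → Prop
  | .eq _ _ => True
  | .pred _ _ => True
  | .neg φ => φ.ImpFree
  | .and φ ψ => φ.ImpFree ∧ ψ.ImpFree
  | .imp _ _ => False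
  | .all _ φ => φ.ImpFree

/-- A canonical falsum: `∀x ¬(x = x)`. -/
def bot : Formula σ := .all 0 (.neg (.eq (.var 0) (.var 0)))

def iffF (φ ψ : Formula σ) : Formula σ := .and (.imp φ ψ) (.imp ψ φ)

def orF (φ ψ : Formula σ) : Formula σ := .neg (.and (.neg φ) (.neg ψ))

end Formula

/-! ### Strong Kleene interpretations and supervaluation structures -/

/-- A (partial, strong Kleene) interpretation on a domain `D`. -/
structure PInterp (σ : Signature) (D : Type) : Type where
  func : (f : σ.Func) → (Fin (σ.farity f) → D) → D
  pos : (P : σ.Pred) → Set (Fin (σ.parity P) → D)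
  neg : (P : σ.Pred) → Set (Fin (σ.parity P) → D)

namespace PInterp
variable {σ : Signature} {D : Type}

def Consistent (I : PInterp σ D) : Prop := ∀ P, I.pos P ∩ I.neg P = ∅

/-- Informational extension of interpretations. -/
def le (I J : PInterp σ D) : Prop := ∀ P, I.pos P ⊆ J.pos P ∧ I.neg P ⊆ J.neg P

end PInterp

def Term.val {σ : Signature} {D : Type} (I : PInterp σ D) (β : ℕ → D) : Term σ → D
  | .var n => β n
  | .func f ts => I.func f (fun i => (ts i).val I β)

section Sat
variable {σ : Signature} {D : Type} {ι : Type}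

/- Strong Kleene supervaluation satisfaction (truth, `SatP`) and falsity (`SatN`),
indexed by an abstract collection `ι` of points, an admissibility relation `R` on them
and an interpretation map `int`. -/
mutual
  def SatP (R : ι → ι → Prop) (int : ι → PInterp σ D) (w : ι) (β : ℕ → D) : Formula σ → Prop
    | .eq s t => s.val (int w) β = t.val (int w) β
    | .pred P ts => (fun i => (ts i).val (int w) β) ∈ (int w).pos P
    | .neg φ => SatN R int w β φ
    | .and φ ψ => SatP R int w β φ ∧ SatP R int w β ψ
    | .imp φ ψ => ∀ w', R w w' → SatP R int w' β φ → SatP R int w' β ψ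
    | .all x φ => ∀ d : D, SatP R int w (Function.update β x d) φ
  def SatN (R : ι → ι → Prop) (int : ι → PInterp σ D) (w : ι) (β : ℕ → D) : Formula σ → Prop
    | .eq s t => ¬ s.val (int w) β = t.val (int w) β
    | .pred P ts => (fun i => (ts i).val (int w) β) ∈ (int w).neg P
    | .neg φ => SatP R int w β φ
    | .and φ ψ => SatN R int w β φ ∨ SatN R int w β ψ
    | .imp φ ψ => SatP R int w β φ ∧ SatN R int w β ψ
    | .all x φ => ∃ d : D, SatN R int w (Function.update β x d) φ
end

end Sat

/-- A (strong Kleene) supervaluation structure. -/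
structure SupStructure (σ : Signature) (D : Type) where
  X : Set (PInterp σ D)
  H : PInterp σ D → PInterp σ D → Prop
  nonemptyD : Nonempty D
  agree : ∀ I ∈ X, ∀ J ∈ X, I.func = J.func
  Hmem : ∀ {I J : PInterp σ D}, H I J → I ∈ X ∧ J ∈ X
  Hrefl : ∀ I ∈ X, H I I
  Htrans : ∀ {I J K : PInterp σ D}, H I J → H J K → H I K
  Hle : ∀ {I J : PInterp σ D}, H I J → I.le J
  consistent : ∀ I ∈ X, I.Consistent

/-- Truth in a supervaluation structure at an interpretation under an assignment. -/
def SupStructure.Sat {σ : Signature} {D : Type} (M : SupStructure σ D)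
    (J : PInterp σ D) (β : ℕ → D) (φ : Formula σ) : Prop :=
  SatP M.H id J β φ

/-! ### The truth language `L_T` -/

/-- The signature `σ.T` extends `σ` by a unary truth predicate (the `none` predicate). -/
def Signature.T (σ : Signature) : Signature where
  Func := σ.Func
  farity := σ.farity
  Pred := Option σ.Pred
  parity := fun P => match P with
    | none => 1
    | some P => σ.parity P

def Term.liftT {σ : Signature} : Term σ → Term σ.T
  | .var n => .var n
  | .func f ts => .func (σ := σ.T) f (fun i => Term.liftT (ts i))

/-- The embedding of `L`-formulas into `L_T`-formulas. -/
def Formula.liftT {σ : Signature} : Formula σ → Formula σ.T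
  | .eq s t => .eq s.liftT t.liftT
  | .pred P ts => .pred (σ := σ.T) (some P) (fun i => Term.liftT (ts i))
  | .neg φ => .neg φ.liftT
  | .and φ ψ => .and φ.liftT ψ.liftT
  | .imp φ ψ => .imp φ.liftT ψ.liftT
  | .all x φ => .all x φ.liftT

/-- The truth predicate applied to a term: `T t`. -/
def Formula.Tp {σ : Signature} (t : Term σ.T) : Formula σ.T :=
  .pred (σ := σ.T) none (fun _ => t)

/-- The closed term given by a constant (i.e. `0`-ary function symbol). -/
def constTerm {σ : Signature} (c : σ.Func) (h : σ.farity c = 0) : Term σ :=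
  .func c (fun i => (Fin.cast h i).elim0)

/-! ### Valuations, basicness and admissibility -/

/-- A valuation assigns a set of `L_T`-sentences to every interpretation. -/
abbrev Val (σ : Signature) (D : Type) := PInterp σ D → Set (Formula σ.T)

/-- The pointwise ordering of valuations (on the interpretations of the structure). -/
def Val.le {σ : Signature} {D : Type} (M : SupStructure σ D) (f g : Val σ D) : Prop :=
  ∀ J ∈ M.X, f J ⊆ g J

/-- A basic valuation: consistent, sound for `L`-sentences and monotone along `H`. -/
structure IsBasic {σ : Signature} {D : Type} (M : SupStructure σ D) (f : Val σ D) : Prop where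
  sent : ∀ J ∈ M.X, ∀ φ ∈ f J, Formula.IsSentence φ
  consistent : ∀ J ∈ M.X, ∀ φ, φ ∈ f J → Formula.neg φ ∉ f J
  sound : ∀ J ∈ M.X, ∀ ψ : Formula σ, ψ.liftT ∈ f J → ∀ β, M.Sat J β ψ
  mono : ∀ {J J' : PInterp σ D}, M.H J J' → f J ⊆ f J'

/-- An admissibility condition on valuations. -/
structure IsAdmCond {σ : Signature} {D : Type} (M : SupStructure σ D)
    (Φ : Val σ D → Set (Val σ D)) : Prop where
  basic : ∀ {f g : Val σ D}, g ∈ Φ f → IsBasic M g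
  empty : ∀ f : Val σ D, ¬ IsBasic M f → Φ f = ∅
  anti : ∀ {f g : Val σ D}, IsBasic M f → Val.le M f g → Φ g ⊆ Φ f
  le_of_mem : ∀ {f g : Val σ D}, g ∈ Φ f → Val.le M f g

/-- The truth interpretation `J_f`: it interprets the truth predicate by `S`
(via the coding `code` of sentences into the domain) and otherwise agrees with `J`. -/
def truthInterp {σ : Signature} {D : Type} (code : Formula σ.T → D)
    (J : PInterp σ D) (S : Set (Formula σ.T)) : PInterp σ.T D where
  func := J.func
  pos := fun P => match P with
    | none => {v | ∃ φ ∈ S, v = fun _ => code φ}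
    | some P => J.pos P
  neg := fun P => match P with
    | none => {v | ∃ φ : Formula σ.T, Formula.neg φ ∈ S ∧ v = fun _ => code φ}
    | some P => J.neg P

/-- Worlds of a truth structure: pairs of an interpretation and a valuation. -/
abbrev TWorld (σ : Signature) (D : Type) := PInterp σ D × Val σ D

/-- The admissibility relation `H_Φ` on truth interpretations, restricted to `X × Y`. -/
def HPhi {σ : Signature} {D : Type} (M : SupStructure σ D) (Φ : Val σ D → Set (Val σ D))
    (Y : Set (Val σ D)) : TWorld σ D → TWorld σ D → Prop :=
  fun p q => p.2 ∈ Y ∧ q.2 ∈ Y ∧ M.H p.1 q.1 ∧ q.2 ∈ Φ p.2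

/-- Satisfaction in the truth structure `(D, X × Y, H_Φ)` at the truth interpretation `J_f`. -/
def TSat {σ : Signature} {D : Type} (M : SupStructure σ D) (Φ : Val σ D → Set (Val σ D))
    (code : Formula σ.T → D) (Y : Set (Val σ D)) (J : PInterp σ D) (f : Val σ D)
    (β : ℕ → D) (φ : Formula σ.T) : Prop :=
  SatP (HPhi M Φ Y) (fun p : TWorld σ D => truthInterp code p.1 (p.2 p.1)) (J, f) β φ

/-! ### The operations `θ` and `Θ`, grounded truth sets -/

/-- The jump `θ_M^Φ(Y, f)`: the valuation collecting the sentences true at `J_f`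
in the truth structure `(D, X × Y, H_Φ)`. -/
def theta {σ : Signature} {D : Type} (M : SupStructure σ D) (Φ : Val σ D → Set (Val σ D))
    (code : Formula σ.T → D) (Y : Set (Val σ D)) (f : Val σ D) : Val σ D :=
  fun J => {φ | Formula.IsSentence φ ∧ ∀ β, TSat M Φ code Y J f β φ}

/-- The operation `Θ_M^Φ(Y_f)`. -/
def Theta {σ : Signature} {D : Type} (M : SupStructure σ D) (Φ : Val σ D → Set (Val σ D))
    (code : Formula σ.T → D) (Y : Set (Val σ D)) (f : Val σ D) : Set (Val σ D) :=
  {g | g ∈ Y ∧ Val.le M (theta M Φ code Y f) g}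

/-- `Y` is a grounded truth set with `≤`-minimal element `f`. -/
def Grounded {σ : Signature} {D : Type} (M : SupStructure σ D) (Φ : Val σ D → Set (Val σ D))
    (Y : Set (Val σ D)) (f : Val σ D) : Prop :=
  (∀ g ∈ Y, IsBasic M g) ∧ f ∈ Y ∧ (∀ g ∈ Y, Val.le M f g) ∧ (Y ∩ Φ f).Nonempty

/-- `Y ∈ Adm_M`: `Y` is a grounded truth set (for some minimal valuation). -/
def IsAdm {σ : Signature} {D : Type} (M : SupStructure σ D) (Φ : Val σ D → Set (Val σ D))
    (Y : Set (Val σ D)) : Prop :=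
  ∃ f, Grounded M Φ Y f

/-! ### Sequent calculi: `K3`, `N3` (flag `hImp`) and `K3T` (flag `hT`) -/

/-- Sequent derivability for the logics of the paper, over the language `L_T`.
`hImp = true` adds the `N3` conditional rules, `hT = true` adds the naive truth rules
(`qt φ` is the quotation name `⌜φ⌝`).  Identity is classical throughout. -/
inductive Deriv {σ : Signature} (qt : Formula σ.T → Term σ.T) (hImp hT : Bool) :
    Set (Formula σ.T) → Set (Formula σ.T) → Prop where
  | ax {Γ Δ : Set (Formula σ.T)} {φ} : φ.IsLiteral →
      Deriv qt hImp hT (insert φ Γ) (insert φ Δ)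
  | cut {Γ Δ φ} : Deriv qt hImp hT Γ (insert φ Δ) → Deriv qt hImp hT (insert φ Γ) Δ →
      Deriv qt hImp hT Γ Δ
  | negL {Γ Δ χ} : χ.IsLiteral → Deriv qt hImp hT Γ (insert χ Δ) →
      Deriv qt hImp hT (insert (.neg χ) Γ) Δ
  | dnL {Γ Δ φ} : Deriv qt hImp hT (insert φ Γ) Δ →
      Deriv qt hImp hT (insert (.neg (.neg φ)) Γ) Δ
  | dnR {Γ Δ φ} : Deriv qt hImp hT Γ (insert φ Δ) →
      Deriv qt hImp hT Γ (insert (.neg (.neg φ)) Δ)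
  | nconjL {Γ Δ φ ψ} : Deriv qt hImp hT (insert (.neg φ) Γ) Δ →
      Deriv qt hImp hT (insert (.neg ψ) Γ) Δ →
      Deriv qt hImp hT (insert (.neg (.and φ ψ)) Γ) Δ
  | nconjR₁ {Γ Δ φ ψ} : Deriv qt hImp hT Γ (insert (.neg φ) Δ) →
      Deriv qt hImp hT Γ (insert (.neg (.and φ ψ)) Δ)
  | nconjR₂ {Γ Δ φ ψ} : Deriv qt hImp hT Γ (insert (.neg ψ) Δ) →
      Deriv qt hImp hT Γ (insert (.neg (.and φ ψ)) Δ)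
  | conjL₁ {Γ Δ φ ψ} : Deriv qt hImp hT (insert φ Γ) Δ →
      Deriv qt hImp hT (insert (.and φ ψ) Γ) Δ
  | conjL₂ {Γ Δ φ ψ} : Deriv qt hImp hT (insert ψ Γ) Δ →
      Deriv qt hImp hT (insert (.and φ ψ) Γ) Δ
  | conjR {Γ Δ φ ψ} : Deriv qt hImp hT Γ (insert φ Δ) → Deriv qt hImp hT Γ (insert ψ Δ) →
      Deriv qt hImp hT Γ (insert (.and φ ψ) Δ)
  | nallL {Γ Δ} {v y : ℕ} {φ : Formula σ.T} :
      (∀ ψ ∈ Γ, y ∉ Formula.free ψ) → (∀ ψ ∈ Δ, y ∉ Formula.free ψ) →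
      y ∉ (Formula.all v φ).free → φ.FreeFor (.var y) v →
      Deriv qt hImp hT (insert (.neg (φ.subst v (.var y))) Γ) Δ →
      Deriv qt hImp hT (insert (.neg (.all v φ)) Γ) Δ
  | nallR {Γ Δ} {v : ℕ} {t : Term σ.T} {φ : Formula σ.T} : φ.FreeFor t v →
      Deriv qt hImp hT Γ (insert (.neg (φ.subst v t)) (insert (.neg (.all v φ)) Δ)) →
      Deriv qt hImp hT Γ (insert (.neg (.all v φ)) Δ)
  | allL {Γ Δ} {v : ℕ} {t : Term σ.T} {φ : Formula σ.T} : φ.FreeFor t v →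
      Deriv qt hImp hT (insert (φ.subst v t) (insert (.all v φ) Γ)) Δ →
      Deriv qt hImp hT (insert (.all v φ) Γ) Δ
  | allR {Γ Δ} {v y : ℕ} {φ : Formula σ.T} :
      (∀ ψ ∈ Γ, y ∉ Formula.free ψ) → (∀ ψ ∈ Δ, y ∉ Formula.free ψ) →
      y ∉ (Formula.all v φ).free → φ.FreeFor (.var y) v →
      Deriv qt hImp hT Γ (insert (φ.subst v (.var y)) Δ) →
      Deriv qt hImp hT Γ (insert (.all v φ) Δ)
  | idRefl {Γ Δ t} : Deriv qt hImp hT (insert (.eq t t) Γ) Δ → Deriv qt hImp hT Γ Δ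
  | idNeqR {Γ Δ s t} : Deriv qt hImp hT (insert (.eq s t) Γ) Δ →
      Deriv qt hImp hT Γ (insert (.neg (.eq s t)) Δ)
  | idRep {Γ Δ} {x : ℕ} {s t : Term σ.T} {φ : Formula σ.T} : φ.FreeFor s x → φ.FreeFor t x →
      Deriv qt hImp hT (insert (φ.subst x t) Γ) Δ →
      Deriv qt hImp hT (insert (.eq s t) (insert (φ.subst x s) Γ)) Δ
  | nimpL₁ {Γ Δ φ ψ} : hImp = true → Deriv qt hImp hT (insert φ Γ) Δ →
      Deriv qt hImp hT (insert (.neg (.imp φ ψ)) Γ) Δ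
  | nimpL₂ {Γ Δ φ ψ} : hImp = true → Deriv qt hImp hT (insert (.neg ψ) Γ) Δ →
      Deriv qt hImp hT (insert (.neg (.imp φ ψ)) Γ) Δ
  | nimpR {Γ Δ φ ψ} : hImp = true → Deriv qt hImp hT Γ (insert φ Δ) →
      Deriv qt hImp hT Γ (insert (.neg ψ) Δ) →
      Deriv qt hImp hT Γ (insert (.neg (.imp φ ψ)) Δ)
  | impL {Γ Δ φ ψ} : hImp = true → Deriv qt hImp hT Γ (insert φ Δ) →
      Deriv qt hImp hT (insert ψ Γ) Δ →
      Deriv qt hImp hT (insert (.imp φ ψ) Γ) Δ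
  | impR {Γ Δ φ ψ} : hImp = true → Deriv qt hImp hT (insert φ Γ) {ψ} →
      Deriv qt hImp hT Γ (insert (.imp φ ψ) Δ)
  | tL {Γ Δ φ} : hT = true → Deriv qt hImp hT (insert φ Γ) Δ →
      Deriv qt hImp hT (insert (.Tp (qt φ)) Γ) Δ
  | tR {Γ Δ φ} : hT = true → Deriv qt hImp hT Γ (insert φ Δ) →
      Deriv qt hImp hT Γ (insert (.Tp (qt φ)) Δ)
  | tnL {Γ Δ φ} : hT = true → Deriv qt hImp hT (insert (.neg φ) Γ) Δ →
      Deriv qt hImp hT (insert (.neg (.Tp (qt φ))) Γ) Δ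
  | tnR {Γ Δ φ} : hT = true → Deriv qt hImp hT Γ (insert (.neg φ) Δ) →
      Deriv qt hImp hT Γ (insert (.neg (.Tp (qt φ))) Δ)

/-- A set of `L_T`-sentences is saturated for the given calculus. -/
def SatSet {σ : Signature} (qt : Formula σ.T → Term σ.T) (hImp hT : Bool)
    (S : Set (Formula σ.T)) : Prop :=
  ∀ Γ Δ : Set (Formula σ.T), Γ.Finite → Γ ⊆ S → Deriv qt hImp hT Γ Δ → (Δ ∩ S).Nonempty

/-- A valuation is `L`-saturated iff all its values are. -/
def ValSaturated {σ : Signature} {D : Type} (M : SupStructure σ D)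
    (qt : Formula σ.T → Term σ.T) (hImp hT : Bool) (f : Val σ D) : Prop :=
  ∀ J ∈ M.X, SatSet qt hImp hT (f J)

/-- The four admissibility conditions of the paper. -/
inductive AdmE : Type
  | c | k3 | n3 | nve

/-- `Φ_c`, `Φ_K3`, `Φ_N3` and `Φ_Nve`. -/
def PhiE {σ : Signature} {D : Type} (M : SupStructure σ D) (qt : Formula σ.T → Term σ.T) :
    AdmE → Val σ D → Set (Val σ D)
  | .c, f => {g | IsBasic M f ∧ IsBasic M g ∧ Val.le M f g}
  | .k3, f => {g | IsBasic M f ∧ IsBasic M g ∧ Val.le M f g ∧ ValSaturated M qt false false g}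
  | .n3, f => {g | IsBasic M f ∧ IsBasic M g ∧ Val.le M f g ∧ ValSaturated M qt true false g}
  | .nve, f => {g | IsBasic M f ∧ IsBasic M g ∧ Val.le M f g ∧ ValSaturated M qt false true g}

/-- `B^T_M`: basic valuations whose values are `K3`-saturated and whose conditional-free
parts are `K3T`-saturated. -/
def BT {σ : Signature} {D : Type} (M : SupStructure σ D) (qt : Formula σ.T → Term σ.T) :
    Set (Val σ D) :=
  {f | IsBasic M f ∧ ∀ J ∈ M.X,
    SatSet qt false true {φ | φ ∈ f J ∧ φ.ImpFree} ∧ SatSet qt false false (f J)}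

/-! ### The Kripke jump `K` and the valuation `f_k` -/

/-- Membership condition for the one-step strong Kleene truth jump `K` relative to `J`. -/
def KMem {σ : Signature} {D : Type} (J : PInterp σ D) (code : Formula σ.T → D)
    (β₀ : ℕ → D) (S : Set (Formula σ.T)) : Formula σ.T → Prop
  | .eq s t => Term.val (truthInterp code J ∅) β₀ s = Term.val (truthInterp code J ∅) β₀ t
  | .pred none ts => ∃ ψ ∈ S,
      (fun i => Term.val (truthInterp code J ∅) β₀ (ts i)) = fun _ => code ψ
  | .pred (some P) ts => (fun i => Term.val (truthInterp code J ∅) β₀ (ts i)) ∈ J.pos P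
  | .neg (.eq s t) =>
      ¬ Term.val (truthInterp code J ∅) β₀ s = Term.val (truthInterp code J ∅) β₀ t
  | .neg (.pred none ts) => ∃ ψ : Formula σ.T, Formula.neg ψ ∈ S ∧
      (fun i => Term.val (truthInterp code J ∅) β₀ (ts i)) = fun _ => code ψ
  | .neg (.pred (some P) ts) => (fun i => Term.val (truthInterp code J ∅) β₀ (ts i)) ∈ J.neg P
  | .neg (.neg φ) => φ ∈ S
  | .neg (.and φ ψ) => Formula.neg φ ∈ S ∨ Formula.neg ψ ∈ S
  | .neg (.imp _ _) => False
  | .neg (.all v φ) => ∃ (c : σ.Func) (h : σ.farity c = 0),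
      Formula.neg (φ.subst v (constTerm (σ := σ.T) c h)) ∈ S
  | .and φ ψ => φ ∈ S ∧ ψ ∈ S
  | .imp _ _ => False
  | .all v φ => ∀ (c : σ.Func) (h : σ.farity c = 0), φ.subst v (constTerm (σ := σ.T) c h) ∈ S

/-- The strong Kleene truth jump relative to `J`. -/
def KJump {σ : Signature} {D : Type} (J : PInterp σ D) (code : Formula σ.T → D)
    (β₀ : ℕ → D) (S : Set (Formula σ.T)) : Set (Formula σ.T) :=
  {φ | Formula.IsSentence φ ∧ KMem J code β₀ S φ}

/-- The valuation `f_k`: at each interpretation `J` it is the minimal fixed point of the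
strong Kleene truth jump over the `K3`-truths of `J`. -/
noncomputable def fk {σ : Signature} {D : Type} (M : SupStructure σ D)
    (code : Formula σ.T → D) : Val σ D :=
  fun J => ⋂₀ {S | KJump J code (fun _ => M.nonemptyD.some) S ⊆ S}

/-! ### Compactness, coding assumptions and Kripkean truth structures -/

/-- `Φ` is compact on `Y`. -/
def CompactOn {σ : Signature} {D : Type} (Φ : Val σ D → Set (Val σ D))
    (Y : Set (Val σ D)) : Prop :=
  ∀ Z ⊆ Y, (∀ (n : ℕ) (h : Fin n → Val σ D), (∀ i, h i ∈ Z) → (⋂ i, Φ (h i)).Nonempty) →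
    (⋂ g ∈ Z, Φ g).Nonempty

/-- Standing assumptions on the coding apparatus: `code φ` is the denotation of the
quotation name `⌜φ⌝ = qt φ`, names are closed and denote rigidly, distinct sentences have
distinct codes, and every element of the domain is named by a constant. -/
structure GoodCoding {σ : Signature} {D : Type} (M : SupStructure σ D)
    (code : Formula σ.T → D) (qt : Formula σ.T → Term σ.T) : Prop where
  inj : Function.Injective code
  closed : ∀ φ, (qt φ).vars = ∅
  val : ∀ (φ : Formula σ.T) (J : PInterp σ D) (S : Set (Formula σ.T)) (β : ℕ → D),
      Term.val (truthInterp code J S) β (qt φ) = code φ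
  names : ∀ d : D, ∃ (c : σ.Func) (h : σ.farity c = 0),
      ∀ (J : PInterp σ D) (S : Set (Formula σ.T)) (β : ℕ → D),
        Term.val (truthInterp code J S) β (constTerm (σ := σ.T) c h) = d

/-- A Kripkean truth structure: a grounded truth structure with `Y ⊆ B^T_M` whose
minimal valuation is a fixed point of `θ` and whose truth set is a fixed point of `Θ`. -/
def IsKripkean {σ : Signature} {D : Type} (M : SupStructure σ D)
    (Φ : Val σ D → Set (Val σ D)) (code : Formula σ.T → D) (qt : Formula σ.T → Term σ.T)
    (Y : Set (Val σ D)) (f : Val σ D) : Prop :=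
  Grounded M Φ Y f ∧ Y ⊆ BT M qt ∧ theta M Φ code Y f = f ∧ Theta M Φ code Y f = Y

/-- A naive valuation (relative to the quotation function `qt`). -/
def NaiveVal {σ : Signature} {D : Type} (M : SupStructure σ D)
    (qt : Formula σ.T → Term σ.T) (g : Val σ D) : Prop :=
  ∀ J ∈ M.X, ∀ φ : Formula σ.T,
    (φ ∈ g J ↔ Formula.Tp (qt φ) ∈ g J) ∧
    (Formula.neg φ ∈ g J ↔ Formula.neg (Formula.Tp (qt φ)) ∈ g J)

/-- The admissibility condition `Φ_{N3-Nve}` requiring admissible precisifications to be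
`N3`-saturated and naive. -/
def PhiN3Nve {σ : Signature} {D : Type} (M : SupStructure σ D)
    (qt : Formula σ.T → Term σ.T) (f : Val σ D) : Set (Val σ D) :=
  {g | IsBasic M f ∧ IsBasic M g ∧ Val.le M f g ∧
    ValSaturated M qt true false g ∧ NaiveVal M qt g}

/-- `(Y, f)` is `θ^Φ`-sound. -/
def ThetaSound {σ : Signature} {D : Type} (M : SupStructure σ D)
    (Φ : Val σ D → Set (Val σ D)) (code : Formula σ.T → D)
    (Y : Set (Val σ D)) (f : Val σ D) : Prop :=
  Y = {g | IsBasic M g ∧ Val.le M f g} ∧ CompactOn Φ Y ∧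
    Val.le M f (theta M Φ code Y f) ∧
    ∀ g ∈ Y, Val.le M g (theta M Φ code Y g) → theta M Φ code Y g ∈ Y →
      (Y ∩ Φ (theta M Φ code Y g)).Nonempty

/-- `A ⊆ ℕ` is `Π¹₁` (via Kleene's normal form). -/
def IsPi11 (A : Set ℕ) : Prop :=
  ∃ R : List ℕ → ℕ → Bool, Computable₂ R ∧
    ∀ n, n ∈ A ↔ ∀ l : ℕ → ℕ, ∃ k₀ : ℕ, ∀ k ≥ k₀, R ((List.range k).map l) n = false

/-! ### Transfinite iteration of `θ` and `Θ` -/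

open Classical in
/-- The simultaneous transfinite iteration `α ↦ (θ^α(Y_f, f), Θ^α(Y_f))`. -/
noncomputable def iter {σ : Signature} {D : Type} (M : SupStructure σ D)
    (Φ : Val σ D → Set (Val σ D)) (code : Formula σ.T → D)
    (Y₀ : Set (Val σ D)) (f₀ : Val σ D) (α : Ordinal.{0}) :
    Val σ D × Set (Val σ D) :=
  Ordinal.limitRecOn α (f₀, Y₀)
    (fun _ p =>
      letI t := theta M Φ code p.2 p.1
      (t, if IsAdm M Φ p.2 then {g | g ∈ p.2 ∧ Val.le M t g} else ∅))
    (fun o _ ih =>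
      letI t : Val σ D := fun J => ⋃ (β : {β : Ordinal.{0} // β < o}), (ih β.1 β.2).1 J
      (t, {g | (∀ β : Ordinal.{0}, ∀ h : β < o, g ∈ (ih β h).2) ∧ Val.le M t g}))
private lemma Val.le_refl' {σ : Signature} {D : Type} (M : SupStructure σ D) (g : Val σ D) :
    Val.le M g g := fun _ _ => Set.Subset.refl _

private lemma Val.le_trans' {σ : Signature} {D : Type} {M : SupStructure σ D}
    {f g h : Val σ D} (h1 : Val.le M f g) (h2 : Val.le M g h) : Val.le M f h :=
  fun J hJ => (h1 J hJ).trans (h2 J hJ)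

private lemma hphi_succ {σ : Signature} {D : Type} {M : SupStructure σ D}
    {Φ : Val σ D → Set (Val σ D)} (hΦ : IsAdmCond M Φ) {Y : Set (Val σ D)} {g : Val σ D}
    {p q : TWorld σ D} (hp : Val.le M g p.2) (h : HPhi M Φ Y p q) :
    q.2 ∈ Y ∧ Val.le M g q.2 :=
  ⟨h.2.1, Val.le_trans' hp (hΦ.le_of_mem h.2.2.2)⟩

private lemma hphi_iff {σ : Signature} {D : Type} {M : SupStructure σ D}
    {Φ : Val σ D → Set (Val σ D)} (hΦ : IsAdmCond M Φ) {Y : Set (Val σ D)} {g : Val σ D}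
    {p q : TWorld σ D} (hpY : p.2 ∈ Y) (hp : Val.le M g p.2) :
    HPhi M Φ Y p q ↔ HPhi M Φ {h | h ∈ Y ∧ Val.le M g h} p q := by
  constructor
  · intro h
    exact ⟨⟨hpY, hp⟩, ⟨h.2.1, Val.le_trans' hp (hΦ.le_of_mem h.2.2.2)⟩, h.2.2.1, h.2.2.2⟩
  · intro h
    exact ⟨h.1.1, h.2.1.1, h.2.2⟩

private lemma sat_gen {σ : Signature} {D : Type} {M : SupStructure σ D}
    {Φ : Val σ D → Set (Val σ D)} (hΦ : IsAdmCond M Φ) (code : Formula σ.T → D)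
    {Y : Set (Val σ D)} {g : Val σ D} (φ : Formula σ.T) :
    ∀ (p : TWorld σ D), p.2 ∈ Y → Val.le M g p.2 → ∀ β : ℕ → D,
      (SatP (HPhi M Φ Y) (fun p : TWorld σ D => truthInterp code p.1 (p.2 p.1)) p β φ ↔
        SatP (HPhi M Φ {h | h ∈ Y ∧ Val.le M g h})
          (fun p : TWorld σ D => truthInterp code p.1 (p.2 p.1)) p β φ) ∧
      (SatN (HPhi M Φ Y) (fun p : TWorld σ D => truthInterp code p.1 (p.2 p.1)) p β φ ↔
        SatN (HPhi M Φ {h | h ∈ Y ∧ Val.le M g h})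
          (fun p : TWorld σ D => truthInterp code p.1 (p.2 p.1)) p β φ) := by
  induction φ with
  | eq s t => intro p _ _ β; exact ⟨Iff.rfl, Iff.rfl⟩
  | pred P ts => intro p _ _ β; exact ⟨Iff.rfl, Iff.rfl⟩
  | neg φ ih =>
    intro p hpY hp β
    exact ⟨(ih p hpY hp β).2, (ih p hpY hp β).1⟩
  | and φ ψ ihφ ihψ =>
    intro p hpY hp β
    constructor
    · exact and_congr (ihφ p hpY hp β).1 (ihψ p hpY hp β).1
    · exact or_congr (ihφ p hpY hp β).2 (ihψ p hpY hp β).2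
  | imp φ ψ ihφ ihψ =>
    intro p hpY hp β
    constructor
    · constructor
      · intro h q hq
        have hq' : HPhi M Φ Y p q := (hphi_iff hΦ hpY hp).2 hq
        obtain ⟨hqY, hqle⟩ := hphi_succ hΦ hp hq'
        exact fun hs => (ihψ q hqY hqle β).1.1 (h q hq' ((ihφ q hqY hqle β).1.2 hs))
      · intro h q hq
        have hq2 : HPhi M Φ {h | h ∈ Y ∧ Val.le M g h} p q := (hphi_iff hΦ hpY hp).1 hq
        obtain ⟨hqY, hqle⟩ := hphi_succ hΦ hp hq
        exact fun hs => (ihψ q hqY hqle β).1.2 (h q hq2 ((ihφ q hqY hqle β).1.1 hs))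
    · exact and_congr (ihφ p hpY hp β).1 (ihψ p hpY hp β).2
  | all x φ ih =>
    intro p hpY hp β
    constructor
    · exact forall_congr' fun d => (ih p hpY hp _).1
    · exact exists_congr fun d => (ih p hpY hp _).2

/-- **Generated substructure lemma** (Lemma 8 of the paper).  Let `Y_f ∈ Adm_M` be a
grounded truth set, `g ∈ Y_f` and `Y_f^{g≤} := {h ∈ Y_f | g ≤ h}`.  If `Φ(g) ∩ Y_f ≠ ∅`
then `θ_M^Φ(Y_f, g) = θ_M^Φ(Y_f^{g≤}, g)`; indeed, for every `L_T`-sentence `φ` and every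
`J ∈ X`: `(D, X × Y_f, H_Φ), J_g ⊩ φ` iff `(D, X × Y_f^{g≤}, H_Φ), J_g ⊩ φ`. -/
theorem generated_substructure {σ : Signature} {D : Type} (M : SupStructure σ D)
    (Φ : Val σ D → Set (Val σ D)) (hΦ : IsAdmCond M Φ)
    (code : Formula σ.T → D) (hcode : Function.Injective code)
    (Y : Set (Val σ D)) (f : Val σ D) (hG : Grounded M Φ Y f)
    (g : Val σ D) (hg : g ∈ Y) (hne : (Φ g ∩ Y).Nonempty) :
    theta M Φ code Y g = theta M Φ code {h | h ∈ Y ∧ Val.le M g h} g ∧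
    ∀ φ : Formula σ.T, φ.IsSentence → ∀ J ∈ M.X,
      ((∀ β, TSat M Φ code Y J g β φ) ↔
        (∀ β, TSat M Φ code {h | h ∈ Y ∧ Val.le M g h} J g β φ)) := by
  have key : ∀ (J : PInterp σ D) (β : ℕ → D) (φ : Formula σ.T),
      TSat M Φ code Y J g β φ ↔ TSat M Φ code {h | h ∈ Y ∧ Val.le M g h} J g β φ :=
    fun J β φ => (sat_gen hΦ code φ (J, g) hg (Val.le_refl' M g) β).1
  constructor
  · funext J
    ext φ
    simp only [theta, Set.mem_setOf_eq]
    exact and_congr Iff.rfl (forall_congr' fun β => key J β φ)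
  · intro φ _ J _
    exact forall_congr' fun β => key J β φ
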